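/- Let U and G be independent real random variables where U is uniformly distributed on [0,1] and G has the Gamma distribution with shape 2 and rate 1. Then e^{−U·G} is uniformly distributed on [0,1], i.e., P(e^{−U·G} ≤ c) = c for all c ∈ [0,1]. -/

import Mathlib

/-!
Write `c = e^{-t}` with `t ≥ 0`, so the event is `{t ≤ U G}`. Conditionally on `G = y > 0`
it has probability `(1 - t / y)⁺`, and against the Gamma(2,1) density `y e^{-y}` this integrates to
`∫_t^∞ (y - t) e^{-y} dy = e^{-t} = c`.
-/

open MeasureTheory ProbabilityTheory Real Set Filter

namespace ProbabilityTheory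

variable {Ω α β : Type*} [MeasurableSpace Ω] [MeasurableSpace α] [MeasurableSpace β]
  {μ : Measure Ω} [IsFiniteMeasure μ] {X : Ω → α} {Y : Ω → β}

theorem IndepFun.measure_preimage_prodMk_eq_lintegral (hXY : IndepFun X Y μ)
    (hX : AEMeasurable X μ) (hY : AEMeasurable Y μ) {s : Set (α × β)} (hs : MeasurableSet s) :
    μ ((fun ω => (X ω, Y ω)) ⁻¹' s) = ∫⁻ y, μ.map X ((fun x => (x, y)) ⁻¹' s) ∂μ.map Y := by
  rw [← Measure.map_apply_of_aemeasurable (hX.prodMk hY) hs,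
    (indepFun_iff_map_prod_eq_prod_map_map hX hY).mp hXY, Measure.prod_apply_symm hs]

end ProbabilityTheory

theorem cond_volume_Icc_zero_one_Ici {a : ℝ} (ha : 0 ≤ a) :
    cond volume (Icc (0 : ℝ) 1) (Ici a) = ENNReal.ofReal (1 - a) := by
  have hinter : Icc (0 : ℝ) 1 ∩ Ici a = Icc a 1 := by
    rw [← Ici_inter_Iic, inter_right_comm, Ici_inter_Ici, sup_eq_right.mpr ha, Ici_inter_Iic]
  rw [cond_apply measurableSet_Icc, hinter, Real.volume_Icc, Real.volume_Icc]
  simp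

theorem gammaPDF_two_one (y : ℝ) : gammaPDF 2 1 y = ENNReal.ofReal (y * exp (-y)) := by
  rcases lt_or_ge y 0 with hy | hy
  · rw [gammaPDF_of_neg hy, ENNReal.ofReal_of_nonpos (mul_nonpos_of_nonpos_of_nonneg hy.le
      (exp_pos _).le)]
  · rw [gammaPDF_of_nonneg hy, Real.Gamma_two]
    norm_num

theorem hasDerivAt_neg_sub_add_one_mul_exp_neg (t y : ℝ) :
    HasDerivAt (fun y => -(y - t + 1) * exp (-y)) ((y - t) * exp (-y)) y := by
  have hlin : HasDerivAt (fun y => -(y - t + 1)) (-1) y :=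
    (((hasDerivAt_id y).sub_const t).add_const 1).neg
  have hexp : HasDerivAt (fun y => exp (-y)) (exp (-y) * (-1)) y := (hasDerivAt_id y).neg.exp
  exact (hlin.mul hexp).congr_deriv (by ring)

theorem tendsto_neg_sub_add_one_mul_exp_neg (t : ℝ) :
    Tendsto (fun y => -(y - t + 1) * exp (-y)) atTop (nhds 0) := by
  have hpow : Tendsto (fun y : ℝ => y ^ 1 * exp (-y)) atTop (nhds 0) :=
    tendsto_pow_mul_exp_neg_atTop_nhds_zero 1
  have hexp : Tendsto (fun y : ℝ => exp (-y)) atTop (nhds 0) := tendsto_exp_neg_atTop_nhds_zero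
  convert hpow.neg.add (hexp.const_mul (t - 1)) using 1
  · funext y
    ring
  · simp

theorem lintegral_ofReal_sub_mul_exp_neg (t : ℝ) :
    ∫⁻ y, ENNReal.ofReal ((y - t) * exp (-y)) = ENNReal.ofReal (exp (-t)) := by
  have hderiv := fun y (_ : y ∈ Ici t) => hasDerivAt_neg_sub_add_one_mul_exp_neg t y
  have hnonneg : ∀ y ∈ Ioi t, 0 ≤ (y - t) * exp (-y) :=
    fun y hy => mul_nonneg (sub_nonneg.mpr hy.le) (exp_pos _).le
  have hsupport : (fun y => ENNReal.ofReal ((y - t) * exp (-y))).support ⊆ Ioi t := by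
    intro y hy
    by_contra hyt
    exact hy (ENNReal.ofReal_of_nonpos (mul_nonpos_of_nonpos_of_nonneg
      (sub_nonpos.mpr (not_lt.mp hyt)) (exp_pos _).le))
  rw [← setLIntegral_eq_of_support_subset hsupport,
    ← ofReal_integral_eq_lintegral_ofReal
      (integrableOn_Ioi_deriv_of_nonneg' hderiv hnonneg (tendsto_neg_sub_add_one_mul_exp_neg t))
      ((ae_restrict_iff' measurableSet_Ioi).mpr (ae_of_all _ hnonneg)),
    integral_Ioi_of_hasDerivAt_of_nonneg' hderiv hnonneg (tendsto_neg_sub_add_one_mul_exp_neg t)]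
  ring_nf

theorem measure_le_uniform_mul_gamma {Ω : Type*} [MeasurableSpace Ω] {μ : Measure Ω}
    [IsProbabilityMeasure μ] {U G : Ω → ℝ} (hU : Measurable U) (hG : Measurable G)
    (hUunif : pdf.IsUniform U (Icc (0 : ℝ) 1) μ volume)
    (hGgamma : μ.map G = gammaMeasure 2 1) (hindep : IndepFun U G μ) {t : ℝ} (ht : 0 ≤ t) :
    μ {ω | t ≤ U ω * G ω} = ENNReal.ofReal (exp (-t)) := by
  have hslice (y : ℝ) :
      gammaPDF 2 1 y * μ.map U {x | t ≤ x * y} = ENNReal.ofReal ((y - t) * exp (-y)) := by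
    rw [gammaPDF_two_one]
    rcases le_or_gt y 0 with hy | hy
    · rw [ENNReal.ofReal_of_nonpos (mul_nonpos_of_nonpos_of_nonneg hy (exp_pos _).le), zero_mul,
        ENNReal.ofReal_of_nonpos (mul_nonpos_of_nonpos_of_nonneg (by linarith) (exp_pos _).le)]
    · have hIci : {x | t ≤ x * y} = Ici (t / y) := by
        ext x
        rw [mem_ofPred_eq, mem_Ici, div_le_iff₀ hy]
      rw [hIci, hUunif, cond_volume_Icc_zero_one_Ici (div_nonneg ht hy.le),
        ← ENNReal.ofReal_mul (mul_nonneg hy.le (exp_pos _).le)]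
      congr 1
      field_simp
  have hs : MeasurableSet {p : ℝ × ℝ | t ≤ p.1 * p.2} :=
    measurableSet_le measurable_const (measurable_fst.mul measurable_snd)
  calc μ {ω | t ≤ U ω * G ω}
      = ∫⁻ y, μ.map U {x | t ≤ x * y} ∂μ.map G :=
        hindep.measure_preimage_prodMk_eq_lintegral hU.aemeasurable hG.aemeasurable hs
    _ = ∫⁻ y, gammaPDF 2 1 y * μ.map U {x | t ≤ x * y} := by
        rw [hGgamma, gammaMeasure]
        exact lintegral_withDensity_eq_lintegral_mul _
          (measurable_gammaPDFReal 2 1).ennreal_ofReal (measurable_measure_prodMk_right hs)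
    _ = ENNReal.ofReal (exp (-t)) := by
        simp_rw [hslice]
        exact lintegral_ofReal_sub_mul_exp_neg t

/-- **`e^{−U·G}` is uniform on `[0,1]` (Appendix E of the paper).**
If `U` is uniform on `[0,1]`, `G` is Gamma(2,1), and `U` and `G` are independent, then
`P(e^{−U·G} ≤ c) = c` for all `c ∈ [0,1]`. -/
theorem exp_neg_uniform_mul_gamma_uniform
    {Ω : Type*} [MeasurableSpace Ω] (μ : Measure Ω) [IsProbabilityMeasure μ]
    (U G : Ω → ℝ) (hU : Measurable U) (hG : Measurable G)
    (hUunif : pdf.IsUniform U (Set.Icc (0 : ℝ) 1) μ volume)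
    (hGgamma : Measure.map G μ = gammaMeasure 2 1)
    (hindep : IndepFun U G μ) :
    ∀ c : ℝ, c ∈ Set.Icc (0 : ℝ) 1 →
      μ {ω | Real.exp (-(U ω * G ω)) ≤ c} = ENNReal.ofReal c := by
  rintro c ⟨hc0, hc1⟩
  rcases hc0.eq_or_lt with rfl | hc
  · simp [(exp_pos _).not_ge]
  have hevent : {ω | exp (-(U ω * G ω)) ≤ c} = {ω | -log c ≤ U ω * G ω} := by
    ext ω
    rw [mem_ofPred_eq, mem_ofPred_eq, ← le_log_iff_exp_le hc, neg_le]
  rw [hevent, measure_le_uniform_mul_gamma hU hG hUunif hGgamma hindep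
    (neg_nonneg.mpr (log_nonpos hc0 hc1)), neg_neg, exp_log hc]
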